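/- Let p be an odd prime and n an integer with p ∤ n. Then τ(n,p) − (1 + (n/p))/2 ≤ (p+1)/4, where (n/p) denotes the Legendre symbol. -/

import Mathlib

/-- `(a,b)` is a target for `n` modulus `c`: `a` and `b` are squares in `ℤ/cℤ`
(zero allowed) and `n + a = b` in `ℤ/cℤ`. -/
def IsTarget (n : ℤ) (c : ℕ) (a b : ZMod c) : Prop :=
  IsSquare a ∧ IsSquare b ∧ (n : ZMod c) + a = b

/-- `τ(n,c)`, the number of targets for `n` modulus `c`. -/
noncomputable def tau (n : ℤ) (c : ℕ) : ℕ :=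
  ({ab : ZMod c × ZMod c | IsTarget n c ab.1 ab.2}).ncard

/-!
With `χ` the quadratic character of `𝔽_p`, one has `2·[a is a square] = 1 + χ a + [a = 0]`.
Targets are the pairs `(a, n + a)` with both entries square, so multiplying two such identities
and summing over `a` leaves, besides character sums that vanish, the sum `∑ χ(a) χ(n + a) = -1`.
Hence `4 τ(n,p) = p + 1 + χ(n) + χ(-n)`, and the bound follows by checking the four sign patterns.
-/

open Finset

section FiniteField

variable {F : Type*} [Field F] [Fintype F] [DecidableEq F]

lemma two_mul_ite_isSquare (a : F) :
    2 * (if IsSquare a then 1 else 0 : ℤ) = 1 + quadraticChar F a + if a = 0 then 1 else 0 := by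
  by_cases h0 : a = 0
  · simp [h0]
  by_cases hs : IsSquare a
  · rw [if_pos hs, if_neg h0, (quadraticChar_one_iff_isSquare h0).mpr hs]; ring
  · rw [if_neg hs, if_neg h0, quadraticChar_neg_one_iff_not_isSquare.mpr hs]; ring

/-- The substitution `a = -n x` turns this sum into `χ(-1)` times the Jacobi sum `J(χ, χ)`. -/
lemma sum_quadraticChar_mul_quadraticChar_add (hF : ringChar F ≠ 2) {n : F} (hn : n ≠ 0) :
    ∑ a : F, quadraticChar F a * quadraticChar F (n + a) = -1 := by
  set χ := quadraticChar F
  have hJ : ∑ x : F, χ x * χ (1 - x) = -χ (-1) := by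
    have := jacobiSum_nontrivial_inv (quadraticChar_ne_one hF)
    rwa [(quadraticChar_isQuadratic F).inv] at this
  have hsubst (x : F) : χ (-n * x) * χ (n + -n * x) = χ (-1) * (χ x * χ (1 - x)) := by
    rw [show -n * x = -1 * n * x by ring, show n + -1 * n * x = n * (1 - x) by ring]
    simp only [map_mul]
    linear_combination (χ (-1) * χ x * χ (1 - x)) * quadraticChar_sq_one hn
  rw [← Fintype.sum_bijective _ (mulLeft_bijective₀ _ (neg_ne_zero.mpr hn)) _ _ fun _ => rfl]
  simp only [hsubst, ← mul_sum, hJ]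
  linear_combination -quadraticChar_sq_one (neg_ne_zero.mpr (one_ne_zero (α := F)))

lemma four_mul_card_filter_isSquare_and_isSquare_add (hF : ringChar F ≠ 2) {n : F} (hn : n ≠ 0) :
    4 * (#{a : F | IsSquare a ∧ IsSquare (n + a)} : ℤ)
      = Fintype.card F + 1 + quadraticChar F n + quadraticChar F (-n) := by
  have hind : 4 * (#{a : F | IsSquare a ∧ IsSquare (n + a)} : ℤ)
      = ∑ a : F, (1 + quadraticChar F a + if a = 0 then 1 else 0)
          * (1 + quadraticChar F (n + a) + if n + a = 0 then 1 else 0) := by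
    simp only [← two_mul_ite_isSquare, card_filter, Nat.cast_sum, mul_sum, ite_and]
    refine sum_congr rfl fun a _ => ?_
    split_ifs <;> norm_num
  have hshift : ∑ a : F, quadraticChar F (n + a) = 0 :=
    (Fintype.sum_equiv (Equiv.addLeft n) _ _ fun _ => rfl).trans (quadraticChar_sum_zero hF)
  simp only [hind, add_mul, mul_add, one_mul, mul_one, mul_ite, mul_zero, sum_add_distrib,
    quadraticChar_sum_zero hF, hshift, sum_quadraticChar_mul_quadraticChar_add hF hn,
    ite_mul, zero_mul, add_eq_zero_iff_neg_eq, sum_ite_eq, sum_ite_eq', mem_univ, if_true,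
    neg_eq_zero, hn, if_false, sum_const, card_univ, nsmul_eq_mul, add_zero]
  ring

end FiniteField

lemma tau_eq_ncard (n : ℤ) (c : ℕ) :
    tau n c = {a : ZMod c | IsSquare a ∧ IsSquare ((n : ZMod c) + a)}.ncard := by
  have hgraph : {ab : ZMod c × ZMod c | IsTarget n c ab.1 ab.2}
      = (fun a => (a, (n : ZMod c) + a)) '' {a | IsSquare a ∧ IsSquare ((n : ZMod c) + a)} := by
    ext ⟨a, b⟩
    simp only [IsTarget, Set.mem_ofPred_eq, Set.mem_image, Prod.mk.injEq]
    constructor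
    · rintro ⟨ha, hb, rfl⟩
      exact ⟨a, ⟨ha, hb⟩, rfl, rfl⟩
    · rintro ⟨a, ⟨ha, hb⟩, rfl, rfl⟩
      exact ⟨ha, hb, rfl⟩
  rw [tau, hgraph, Set.ncard_image_of_injective _ fun _ _ h => congrArg Prod.fst h]

theorem stmt_16 (p : ℕ) [Fact p.Prime] (hodd : p ≠ 2) (n : ℤ)
    (hn : ¬ (p : ℤ) ∣ n) :
    (tau n p : ℤ) - (1 + legendreSym p n) / 2 ≤ ((p : ℤ) + 1) / 4 := by
  have hF : ringChar (ZMod p) ≠ 2 := by rwa [ZMod.ringChar_zmod_n]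
  have hn0 : (n : ZMod p) ≠ 0 := by rwa [Ne, ZMod.intCast_zmod_eq_zero_iff_dvd]
  have hcount : 4 * (tau n p : ℤ) = p + 1 + legendreSym p n + legendreSym p (-n) := by
    have h := four_mul_card_filter_isSquare_and_isSquare_add hF hn0
    rw [ZMod.card, ← Set.ncard_coe_finset, coe_filter_univ, ← tau_eq_ncard] at h
    simpa [legendreSym] using h
  have hneg0 : ((-n : ℤ) : ZMod p) ≠ 0 := by rwa [Int.cast_neg, neg_ne_zero]
  rcases legendreSym.eq_one_or_neg_one p hn0 with h | h <;>
    rcases legendreSym.eq_one_or_neg_one p hneg0 with h' | h' <;>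
    omega
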